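/- arXiv:1709.00825 — 9 statements merged into one kernel-verified Lean document; each statement's English description precedes it below -/
import Mathlib

section
/- Let B be a 3×n matrix over ZMod N with associated difference matrix D (rows D_1, D_2, D_3 given by D_1 j = B 0 j - B 1 j, D_2 j = B 0 j - B 2 j, D_3 j = B 1 j - B 2 j). Then the Tanner graph is 6-cycle free if and only if for all pairwise distinct columns j1, j2, j3 one has -D_1 j1 + D_2 j2 - D_3 j3 ≠ 0 in ZMod N (this must hold for every assignment of distinct columns j1, j2, j3 to the three rows). -/
/-!
The alternating sum of the exponents along a 6-cycle is invariant under rotating the cycle and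
changes sign when the cycle is traversed backwards. Since rotations and reversal act transitively
on the orderings of the three rows of a 3 × n matrix, every 6-cycle can be read with its rows in
the order `0, 1, 2`, and for that order the alternating sum is exactly `-D₁ j₁ + D₂ j₂ - D₃ j₃`.
-/

namespace Matrix

variable {m n R : Type*} [AddCommGroup R]

/-- The alternating sum of `B` along the closed path `(i₀,j₀) (i₀,j₁) (i₁,j₁) (i₁,j₂) (i₂,j₂)
(i₂,j₀)`; for an exponent matrix over `ZMod N` its vanishing is the 6-cycle condition of the
lifted Tanner graph. -/
def hexagonSum (B : Matrix m n R) (i₀ i₁ i₂ : m) (j₀ j₁ j₂ : n) : R :=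
  (B i₀ j₀ - B i₀ j₁) + (B i₁ j₁ - B i₁ j₂) + (B i₂ j₂ - B i₂ j₀)

def HasHexagonOnRows (B : Matrix m n R) (i₀ i₁ i₂ : m) : Prop :=
  ∃ j₀ j₁ j₂ : n, j₀ ≠ j₁ ∧ j₁ ≠ j₂ ∧ j₀ ≠ j₂ ∧ hexagonSum B i₀ i₁ i₂ j₀ j₁ j₂ = 0

theorem hexagonSum_rotate (B : Matrix m n R) (i₀ i₁ i₂ : m) (j₀ j₁ j₂ : n) :
    hexagonSum B i₁ i₂ i₀ j₁ j₂ j₀ = hexagonSum B i₀ i₁ i₂ j₀ j₁ j₂ := by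
  simp only [hexagonSum]
  abel

theorem hexagonSum_reverse (B : Matrix m n R) (i₀ i₁ i₂ : m) (j₀ j₁ j₂ : n) :
    hexagonSum B i₂ i₁ i₀ j₀ j₂ j₁ = -hexagonSum B i₀ i₁ i₂ j₀ j₁ j₂ := by
  simp only [hexagonSum]
  abel

variable {B : Matrix m n R} {i₀ i₁ i₂ : m}

theorem HasHexagonOnRows.rotate (h : HasHexagonOnRows B i₀ i₁ i₂) :
    HasHexagonOnRows B i₁ i₂ i₀ := by
  obtain ⟨j₀, j₁, j₂, h₀₁, h₁₂, h₀₂, hsum⟩ := h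
  exact ⟨j₁, j₂, j₀, h₁₂, h₀₂.symm, h₀₁.symm, by rw [hexagonSum_rotate, hsum]⟩

theorem HasHexagonOnRows.reverse (h : HasHexagonOnRows B i₀ i₁ i₂) :
    HasHexagonOnRows B i₂ i₁ i₀ := by
  obtain ⟨j₀, j₁, j₂, h₀₁, h₁₂, h₀₂, hsum⟩ := h
  exact ⟨j₀, j₂, j₁, h₀₂, h₁₂.symm, h₀₁, by rw [hexagonSum_reverse, hsum, neg_zero]⟩

theorem HasHexagonOnRows.of_ne {B : Matrix (Fin 3) n R} {i₀ i₁ i₂ : Fin 3}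
    (h₀₁ : i₀ ≠ i₁) (h₁₂ : i₁ ≠ i₂) (h₀₂ : i₀ ≠ i₂) (h : HasHexagonOnRows B i₀ i₁ i₂) :
    HasHexagonOnRows B 0 1 2 := by
  fin_cases i₀ <;> fin_cases i₁ <;> fin_cases i₂ <;> simp at h₀₁ h₁₂ h₀₂
  · exact h
  · exact h.rotate.reverse
  · exact h.reverse.rotate
  · exact h.rotate.rotate
  · exact h.rotate
  · exact h.reverse

end Matrix

/-- For a 3×n exponent matrix, 6-cycle-freeness of the Tanner graph is equivalent to
`-D₁ j₁ + D₂ j₂ - D₃ j₃ ≠ 0` for all pairwise distinct columns, where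
`D₁ j = B 0 j - B 1 j`, `D₂ j = B 0 j - B 2 j`, `D₃ j = B 1 j - B 2 j`. -/
theorem stmt_1 (n N : ℕ) (B : Matrix (Fin 3) (Fin n) (ZMod N)) :
    (¬ ∃ (i0 i1 i2 : Fin 3) (j0 j1 j2 : Fin n),
        i0 ≠ i1 ∧ i1 ≠ i2 ∧ i0 ≠ i2 ∧ j0 ≠ j1 ∧ j1 ≠ j2 ∧ j0 ≠ j2 ∧
        (B i0 j0 - B i0 j1) + (B i1 j1 - B i1 j2) + (B i2 j2 - B i2 j0) = 0) ↔
    (∀ j1 j2 j3 : Fin n, j1 ≠ j2 → j1 ≠ j3 → j2 ≠ j3 →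
        -(B 0 j1 - B 1 j1) + (B 0 j2 - B 2 j2) - (B 1 j3 - B 2 j3) ≠ 0) := by
  constructor
  · intro hfree j1 j2 j3 h12 h13 h23 hzero
    exact hfree ⟨0, 1, 2, j2, j1, j3, by decide, by decide, by decide,
      h12.symm, h13, h23, by linear_combination hzero⟩
  · rintro hne ⟨i0, i1, i2, j0, j1, j2, h01, h12, h02, k01, k12, k02, hcycle⟩
    obtain ⟨j0, j1, j2, k01, k12, k02, hzero⟩ :=
      Matrix.HasHexagonOnRows.of_ne h01 h12 h02 ⟨j0, j1, j2, k01, k12, k02, hcycle⟩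
    rw [Matrix.hexagonSum] at hzero
    exact hne j1 j0 j2 k01.symm k12 k02 (by linear_combination hzero)
end

section
/- Let B be an m×n matrix over ZMod N whose first row and first column are identically 0, with m, n ≥ 3. Define the DD-values DD_{(i,i'),(j,j')} = (B i j - B i' j) - (B i j' - B i' j') for 1 ≤ i < i' ≤ m-1 (rows of D indexed by pairs not involving row 0 reduce similarly) and distinct columns j ≠ j'. If for all pairs (i1,i2) ≠ (i1',i2') of row-pairs and all column-pairs the corresponding DD-values are pairwise distinct and nonzero (the 8-cycle-free condition on DD), then for every 3×3 submatrix containing the first (all-zero) row, all six Fossorier 6-cycle sums are nonzero; i.e., the nonexistence of 8-cycles implies the nonexistence of 6-cycles involving the first row. -/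
/-!
Fossorier's sum is invariant under rotating the three rows together with the three columns,
so the zero row may be taken to come first. With a zero row `z`, the sum over rows `z, b, c`
and columns `j₀, j₁, j₂` equals `DD_{(z,b),(j₂,j₁)} - DD_{(z,c),(j₂,j₀)}`, a difference of two
`DD`-entries lying in the different row pairs `(z,b)` and `(z,c)`; distinctness of the `DD`-entries
therefore forces it to be nonzero.
-/

section DD

variable {ι κ G : Type*} [AddCommGroup G]

def ddEntry (B : Matrix ι κ G) (i i' : ι) (j j' : κ) : G :=
  (B i j - B i' j) - (B i j' - B i' j')

def DDEntriesDistinct [LT ι] (B : Matrix ι κ G) : Prop :=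
  ∀ (i₁ i₂ i₁' i₂' : ι) (j₁ j₂ j₁' j₂' : κ), i₁ < i₂ → i₁' < i₂' → j₁ ≠ j₂ → j₁' ≠ j₂' →
    (i₁, i₂, j₁, j₂) ≠ (i₁', i₂', j₁', j₂') → ddEntry B i₁ i₂ j₁ j₂ ≠ ddEntry B i₁' i₂' j₁' j₂'

def fossorierSum (B : Matrix ι κ G) (i₀ i₁ i₂ : ι) (j₀ j₁ j₂ : κ) : G :=
  (B i₀ j₀ - B i₀ j₁) + (B i₁ j₁ - B i₁ j₂) + (B i₂ j₂ - B i₂ j₀)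

variable (B : Matrix ι κ G)

theorem fossorierSum_rotate (i₀ i₁ i₂ : ι) (j₀ j₁ j₂ : κ) :
    fossorierSum B i₀ i₁ i₂ j₀ j₁ j₂ = fossorierSum B i₁ i₂ i₀ j₁ j₂ j₀ := by
  unfold fossorierSum
  abel

theorem fossorierSum_of_row_eq_zero {z : ι} (hz : B z = 0) (b c : ι) (j₀ j₁ j₂ : κ) :
    fossorierSum B z b c j₀ j₁ j₂ = ddEntry B z b j₂ j₁ - ddEntry B z c j₂ j₀ := by
  simp only [fossorierSum, ddEntry, hz, Pi.zero_apply]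
  abel

variable [LinearOrder ι] {B}

theorem fossorierSum_ne_zero_of_row_eq_zero (hB : DDEntriesDistinct B) {z b c : ι}
    (hz : B z = 0) (hb : z < b) (hc : z < c) (hbc : b ≠ c) {j₀ j₁ j₂ : κ}
    (h₀₂ : j₀ ≠ j₂) (h₁₂ : j₁ ≠ j₂) : fossorierSum B z b c j₀ j₁ j₂ ≠ 0 := by
  rw [fossorierSum_of_row_eq_zero B hz, sub_ne_zero]
  exact hB z b z c j₂ j₁ j₂ j₀ hb hc h₁₂.symm h₀₂.symm fun h => hbc (congrArg (·.2.1) h)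

theorem fossorierSum_ne_zero_of_bot_row (hB : DDEntriesDistinct B) {z : ι} (hbot : IsBot z)
    (hz : B z = 0) {i₀ i₁ i₂ : ι} (hzi : z = i₀ ∨ z = i₁ ∨ z = i₂)
    (hi₀₁ : i₀ ≠ i₁) (hi₀₂ : i₀ ≠ i₂) (hi₁₂ : i₁ ≠ i₂) {j₀ j₁ j₂ : κ}
    (hj₀₁ : j₀ ≠ j₁) (hj₀₂ : j₀ ≠ j₂) (hj₁₂ : j₁ ≠ j₂) :
    fossorierSum B i₀ i₁ i₂ j₀ j₁ j₂ ≠ 0 := by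
  have lt_of_ne {r : ι} (hr : z ≠ r) : z < r := (hbot r).lt_of_ne hr
  rcases hzi with rfl | rfl | rfl
  · exact fossorierSum_ne_zero_of_row_eq_zero hB hz (lt_of_ne hi₀₁) (lt_of_ne hi₀₂) hi₁₂
      hj₀₂ hj₁₂
  · rw [fossorierSum_rotate]
    exact fossorierSum_ne_zero_of_row_eq_zero hB hz (lt_of_ne hi₁₂) (lt_of_ne hi₀₁.symm)
      hi₀₂.symm hj₀₁.symm hj₀₂.symm
  · rw [fossorierSum_rotate, fossorierSum_rotate]
    exact fossorierSum_ne_zero_of_row_eq_zero hB hz (lt_of_ne hi₀₂.symm) (lt_of_ne hi₁₂.symm)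
      hi₀₁ hj₁₂.symm hj₀₁

end DD

theorem Set.pairwise_ne_of_triple_eq {α : Type*} {a b c x y w : α}
    (h : ({a, b, c} : Set α) = {x, y, w}) (hxy : x ≠ y) (hxw : x ≠ w) (hyw : y ≠ w) :
    a ≠ b ∧ a ≠ c ∧ b ≠ c := by
  have h3 : ({a, b, c} : Set α).ncard = 3 :=
    h ▸ Set.ncard_eq_three.2 ⟨x, y, w, hxy, hxw, hyw, rfl⟩
  have pair_le (u v : α) : ({u, v} : Set α).ncard ≤ 2 := by
    simpa using Set.ncard_insert_le u {v}
  refine ⟨?_, ?_, ?_⟩ <;> rintro rfl <;>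
    simp only [Set.mem_insert_iff, Set.mem_singleton_iff, true_or, or_true,
      Set.insert_eq_of_mem] at h3 <;>
    exact absurd h3 ((pair_le _ _).trans_lt (by norm_num)).ne

/-- For an exponent matrix whose first row and first column are zero, the 8-cycle-free
condition on the matrix `DD` (all entries nonzero and pairwise distinct) implies that
every Fossorier 6-cycle sum through a 3×3 submatrix containing the first row is nonzero. -/
theorem stmt_3 (m n N : ℕ) (hm : 3 ≤ m)
    (B : Matrix (Fin m) (Fin n) (ZMod N))
    (hrow : ∀ j, B ⟨0, by omega⟩ j = 0)
    (hdist : ∀ (i1 i2 i1' i2' : Fin m) (j1 j2 j1' j2' : Fin n),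
      i1 < i2 → i1' < i2' → j1 ≠ j2 → j1' ≠ j2' →
      (i1, i2, j1, j2) ≠ (i1', i2', j1', j2') →
      (B i1 j1 - B i2 j1) - (B i1 j2 - B i2 j2) ≠
        (B i1' j1' - B i2' j1') - (B i1' j2' - B i2' j2')) :
    ∀ (i i' : Fin m), (⟨0, by omega⟩ : Fin m) < i → i < i' →
      ∀ (i0 i1 i2 : Fin m), ({i0, i1, i2} : Set (Fin m)) = {⟨0, by omega⟩, i, i'} →
      ∀ (j0 j1 j2 : Fin n), j0 ≠ j1 → j1 ≠ j2 → j0 ≠ j2 →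
      (B i0 j0 - B i0 j1) + (B i1 j1 - B i1 j2) + (B i2 j2 - B i2 j0) ≠ 0 := by
  intro i i' hi hii' i0 i1 i2 hset j0 j1 j2 hj₀₁ hj₁₂ hj₀₂
  obtain ⟨hi₀₁, hi₀₂, hi₁₂⟩ :=
    Set.pairwise_ne_of_triple_eq hset hi.ne (hi.trans hii').ne hii'.ne
  have hzero_mem : (⟨0, by omega⟩ : Fin m) ∈ ({i0, i1, i2} : Set (Fin m)) :=
    hset ▸ Set.mem_insert _ _
  exact fossorierSum_ne_zero_of_bot_row hdist (fun r => Nat.zero_le r.1) (funext hrow)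
    (by simpa [eq_comm] using hzero_mem) hi₀₁ hi₀₂ hi₁₂ hj₀₁ hj₀₂ hj₁₂
end

section
/- Let B be an m×n matrix over ZMod N, m ≥ 2, n ≥ 2, such that the Tanner graph of the associated QC-LDPC code has girth at least 10 (equivalently, the 8-cycle-free DD-condition holds: for each row-pair (i,i') with i < i' and each ordered pair of distinct columns (j,j'), the value (B i j - B i' j) - (B i j' - B i' j') is nonzero in ZMod N, and all these values over all row-pairs and ordered column-pairs are pairwise distinct). Then N ≥ 2·C(n,2)·C(m,2) + 1 = m(m-1)n(n-1)/2 + 1. -/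
/-!
The DD-values indexed by row pairs `i < i'` and ordered pairs of distinct columns are
`2·C(n,2)·C(m,2)` pairwise distinct nonzero elements of `ZMod N`, which has only `N - 1` of them.
-/

open Finset

lemma Finset.card_offDiag_eq_two_mul_choose_two {α : Type*} [DecidableEq α] (s : Finset α) :
    #s.offDiag = 2 * (#s).choose 2 := by
  rw [← Sym2.two_mul_card_image_offDiag, Sym2.card_image_offDiag]

lemma Finset.card_add_one_le_of_injOn_of_ne {α β : Type*} [Fintype β] [DecidableEq β]
    {s : Finset α} {f : α → β} {b : β} (hne : ∀ a ∈ s, f a ≠ b) (hinj : Set.InjOn f s) :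
    #s + 1 ≤ Fintype.card β := by
  have hs : #s ≤ #({b}ᶜ : Finset β) :=
    card_le_card_of_injOn f (fun a ha => by simpa using hne a ha) hinj
  have hβ : 0 < Fintype.card β := Fintype.card_pos_iff.mpr ⟨b⟩
  rw [card_compl, card_singleton] at hs
  omega

section DD

variable {ι κ R : Type*} [Fintype ι] [LinearOrder ι] [Fintype κ]

/-- The entry of the paper's DD-matrix of `B` at row pair `(i, i')` and column pair `(j, j')`. -/
def Matrix.ddValue [AddCommGroup R] (B : Matrix ι κ R) (i i' : ι) (j j' : κ) : R :=
  (B i j - B i' j) - (B i j' - B i' j')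

variable (ι κ) in
def ddIndex : Finset ((ι × ι) × (κ × κ)) :=
  ({p : ι × ι | p.1 < p.2} : Finset (ι × ι)) ×ˢ (univ : Finset κ).offDiag

lemma mem_ddIndex {p : (ι × ι) × (κ × κ)} : p ∈ ddIndex ι κ ↔ p.1.1 < p.1.2 ∧ p.2.1 ≠ p.2.2 := by
  simp [ddIndex]

lemma card_ddIndex [DecidableEq κ] :
    #(ddIndex ι κ) = 2 * (Fintype.card κ).choose 2 * (Fintype.card ι).choose 2 := by
  rw [ddIndex, card_product, Fintype.card_product_filter_lt, card_offDiag_eq_two_mul_choose_two,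
    card_univ, mul_comm]

end DD

theorem stmt_4_general (m n N : ℕ) (hN : 0 < N)
    (B : Matrix (Fin m) (Fin n) (ZMod N))
    (hnz : ∀ (i i' : Fin m) (j j' : Fin n), i < i' → j ≠ j' →
      (B i j - B i' j) - (B i j' - B i' j') ≠ 0)
    (hdist : ∀ (i1 i2 i1' i2' : Fin m) (j1 j2 j1' j2' : Fin n),
      i1 < i2 → i1' < i2' → j1 ≠ j2 → j1' ≠ j2' →
      (i1, i2, j1, j2) ≠ (i1', i2', j1', j2') →
      (B i1 j1 - B i2 j1) - (B i1 j2 - B i2 j2) ≠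
        (B i1' j1' - B i2' j1') - (B i1' j2' - B i2' j2')) :
    2 * Nat.choose n 2 * Nat.choose m 2 + 1 ≤ N := by
  have : NeZero N := ⟨hN.ne'⟩
  have hle := card_add_one_le_of_injOn_of_ne (s := ddIndex (Fin m) (Fin n))
    (f := fun p => B.ddValue p.1.1 p.1.2 p.2.1 p.2.2) (b := 0) ?_ ?_
  · simpa [card_ddIndex] using hle
  · rintro ⟨⟨i, i'⟩, j, j'⟩ hp
    exact hnz i i' j j' (mem_ddIndex.1 hp).1 (mem_ddIndex.1 hp).2
  · rintro ⟨⟨i1, i2⟩, j1, j2⟩ hp ⟨⟨i1', i2'⟩, j1', j2'⟩ hq hval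
    rw [mem_coe, mem_ddIndex] at hp hq
    by_contra hne
    exact hdist i1 i2 i1' i2' j1 j2 j1' j2' hp.1 hq.1 hp.2 hq.2 (by simpa using hne) hval

/-- If the Tanner graph of the QC-LDPC code with exponent matrix `B` has girth at least 10
(all `DD`-entries nonzero and pairwise distinct), then `N ≥ 2·C(n,2)·C(m,2) + 1`. -/
theorem stmt_4 (m n N : ℕ) (hm : 2 ≤ m) (hn : 2 ≤ n) (hN : 0 < N)
    (B : Matrix (Fin m) (Fin n) (ZMod N))
    (hnz : ∀ (i i' : Fin m) (j j' : Fin n), i < i' → j ≠ j' →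
      (B i j - B i' j) - (B i j' - B i' j') ≠ 0)
    (hdist : ∀ (i1 i2 i1' i2' : Fin m) (j1 j2 j1' j2' : Fin n),
      i1 < i2 → i1' < i2' → j1 ≠ j2 → j1' ≠ j2' →
      (i1, i2, j1, j2) ≠ (i1', i2', j1', j2') →
      (B i1 j1 - B i2 j1) - (B i1 j2 - B i2 j2) ≠
        (B i1' j1' - B i2' j1') - (B i1' j2' - B i2' j2')) :
    2 * Nat.choose n 2 * Nat.choose m 2 + 1 ≤ N :=
  stmt_4_general m n N hN B hnz hdist
end

section
/- Let B be a multiple-edge exponent matrix: an m×n array whose (i,j) entry is a finite set B_{ij} ⊆ ZMod N. Suppose the associated Tanner graph has girth at least 6 (no 4-cycles), i.e.: (1) for every entry and every two distinct elements x, y ∈ B_{ij}, 2(x-y) ≠ 0 in ZMod N; (2) within each row i, all differences x - y with x ≠ y ∈ B_{ij} over all columns j are pairwise distinct; (3) within each column j, all such differences over all rows i are pairwise distinct; (4) for each pair of rows i ≠ i' and each column j, all values x - y with x ∈ B_{ij}, y ∈ B_{i'j}, taken over all columns j, are pairwise distinct. Then N ≥ max(A, B, C) where A = max over rows i of 2·Σ_j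 C(|B_{ij}|, 2), B = max over columns j of 2·Σ_i C(|B_{ij}|, 2), and C = max over row pairs i ≠ i' of Σ_j |B_{ij}|·|B_{i'j}|. -/
/-!
Each bound counts a family of ordered pairs `(x, y)`, tagged by the entry they come from, whose
differences `x - y` are pairwise distinct by the girth hypotheses; distinct elements of `ZMod N`
number at most `N`. In a single row or column the pairs are the off-diagonal pairs of each
entry, `2 * C(|B i j|, 2)` of them; for two rows `i ≠ i'` they are `B i j × B i' j`.
-/

open Finset

lemma sum_card_le_card_of_sub_ne {ι G : Type*} [Fintype G] [Sub G] (s : Finset ι)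
    (T : ι → Finset (G × G))
    (hT : ∀ j ∈ s, ∀ j' ∈ s, ∀ p ∈ T j, ∀ q ∈ T j', (j, p) ≠ (j', q) → p.1 - p.2 ≠ q.1 - q.2) :
    ∑ j ∈ s, #(T j) ≤ Fintype.card G := by
  rw [← card_sigma, ← card_univ]
  refine card_le_card_of_injOn (fun a => a.2.1 - a.2.2) (fun _ _ => mem_univ _) ?_
  rintro ⟨j, p⟩ hp ⟨j', q⟩ hq hpq
  simp only [mem_coe, mem_sigma] at hp hq
  by_contra hne
  exact hT j hp.1 j' hq.1 p hp.2 q hq.2 (by simpa [Sigma.ext_iff] using hne) hpq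

lemma two_mul_choose_card_two {α : Type*} [DecidableEq α] (s : Finset α) :
    2 * (#s).choose 2 = #s.offDiag := by
  rw [← Sym2.card_image_offDiag, Sym2.two_mul_card_image_offDiag]

lemma two_mul_sum_choose_card_le_card {ι G : Type*} [Fintype G] [AddGroup G] [DecidableEq G]
    (s : Finset ι) (A : ι → Finset G)
    (hA : ∀ j ∈ s, ∀ j' ∈ s, ∀ x ∈ A j, ∀ y ∈ A j, ∀ x' ∈ A j', ∀ y' ∈ A j', x ≠ y → x' ≠ y' →
      (j, x, y) ≠ (j', x', y') → x - y ≠ x' - y') :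
    2 * ∑ j ∈ s, (#(A j)).choose 2 ≤ Fintype.card G := by
  simp only [mul_sum, two_mul_choose_card_two]
  refine sum_card_le_card_of_sub_ne s _ fun j hj j' hj' p hp q hq hne => ?_
  rw [mem_offDiag] at hp hq
  exact hA j hj j' hj' p.1 hp.1 p.2 hp.2.1 q.1 hq.1 q.2 hq.2.1 hp.2.2 hq.2.2 hne

lemma sum_card_mul_card_le_card {ι G : Type*} [Fintype G] [AddGroup G] (s : Finset ι)
    (A A' : ι → Finset G)
    (hA : ∀ j ∈ s, ∀ j' ∈ s, ∀ x ∈ A j, ∀ y ∈ A' j, ∀ x' ∈ A j', ∀ y' ∈ A' j',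
      (j, x, y) ≠ (j', x', y') → x - y ≠ x' - y') :
    ∑ j ∈ s, #(A j) * #(A' j) ≤ Fintype.card G := by
  simp only [← card_product]
  refine sum_card_le_card_of_sub_ne s _ fun j hj j' hj' p hp q hq hne => ?_
  rw [mem_product] at hp hq
  exact hA j hj j' hj' p.1 hp.1 p.2 hp.2 q.1 hq.1 q.2 hq.2 hne

theorem stmt_7_general (m n N : ℕ) (hN : 0 < N) (B : Fin m → Fin n → Finset (ZMod N))
    (h2 : ∀ (i : Fin m) (j j' : Fin n), ∀ x ∈ B i j, ∀ y ∈ B i j,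
      ∀ x' ∈ B i j', ∀ y' ∈ B i j', x ≠ y → x' ≠ y' →
      (j, x, y) ≠ (j', x', y') → x - y ≠ x' - y')
    (h3 : ∀ (j : Fin n) (i i' : Fin m), ∀ x ∈ B i j, ∀ y ∈ B i j,
      ∀ x' ∈ B i' j, ∀ y' ∈ B i' j, x ≠ y → x' ≠ y' →
      (i, x, y) ≠ (i', x', y') → x - y ≠ x' - y')
    (h4 : ∀ (i i' : Fin m), i ≠ i' → ∀ (j j' : Fin n),
      ∀ x ∈ B i j, ∀ y ∈ B i' j, ∀ x' ∈ B i j', ∀ y' ∈ B i' j',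
      (j, x, y) ≠ (j', x', y') → x - y ≠ x' - y') :
    (∀ i : Fin m, 2 * ∑ j, Nat.choose (B i j).card 2 ≤ N) ∧
    (∀ j : Fin n, 2 * ∑ i, Nat.choose (B i j).card 2 ≤ N) ∧
    (∀ i i' : Fin m, i ≠ i' → ∑ j, (B i j).card * (B i' j).card ≤ N) := by
  have : NeZero N := ⟨hN.ne'⟩
  refine ⟨fun i => ?_, fun j => ?_, fun i i' hii' => ?_⟩
  · exact (two_mul_sum_choose_card_le_card _ _ fun j _ j' _ => h2 i j j').trans_eq (ZMod.card N)
  · exact (two_mul_sum_choose_card_le_card _ _ fun i _ i' _ => h3 j i i').trans_eq (ZMod.card N)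
  · exact (sum_card_mul_card_le_card _ _ _ fun j _ j' _ => h4 i i' hii' j j').trans_eq
      (ZMod.card N)

/-- Lower bound on the lifting degree of a multiple-edge QC-LDPC code with girth at
least 6: `N ≥ max(A, B, C)`, expressed as the three families of inequalities. -/
theorem stmt_7 (m n N : ℕ) (hN : 0 < N) (B : Fin m → Fin n → Finset (ZMod N))
    (h1 : ∀ (i : Fin m) (j : Fin n), ∀ x ∈ B i j, ∀ y ∈ B i j, x ≠ y → 2 * (x - y) ≠ 0)
    (h2 : ∀ (i : Fin m) (j j' : Fin n), ∀ x ∈ B i j, ∀ y ∈ B i j,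
      ∀ x' ∈ B i j', ∀ y' ∈ B i j', x ≠ y → x' ≠ y' →
      (j, x, y) ≠ (j', x', y') → x - y ≠ x' - y')
    (h3 : ∀ (j : Fin n) (i i' : Fin m), ∀ x ∈ B i j, ∀ y ∈ B i j,
      ∀ x' ∈ B i' j, ∀ y' ∈ B i' j, x ≠ y → x' ≠ y' →
      (i, x, y) ≠ (i', x', y') → x - y ≠ x' - y')
    (h4 : ∀ (i i' : Fin m), i ≠ i' → ∀ (j j' : Fin n),
      ∀ x ∈ B i j, ∀ y ∈ B i' j, ∀ x' ∈ B i j', ∀ y' ∈ B i' j',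
      (j, x, y) ≠ (j', x', y') → x - y ≠ x' - y') :
    (∀ i : Fin m, 2 * ∑ j, Nat.choose (B i j).card 2 ≤ N) ∧
    (∀ j : Fin n, 2 * ∑ i, Nat.choose (B i j).card 2 ≤ N) ∧
    (∀ i i' : Fin m, i ≠ i' → ∑ j, (B i j).card * (B i' j).card ≤ N) :=
  stmt_7_general m n N hN B h2 h3 h4
end

section
/- Let B be a multiple-edge exponent matrix over ZMod N in which every entry B_{ij} (for i ∈ Fin 2, j ∈ Fin n) is a 2-element subset of ZMod N (a (4,2n)-regular multiple-edge code with all base-matrix entries equal to 2). If the associated Tanner graph has girth at least 6 (conditions (1)-(4) of the multiple-edge 4-cycle-freeness), then N ≥ 4n. -/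
open Finset

theorem sum_card_mul_card_le_card_of_sub_injective {ι G : Type*} [Fintype ι] [AddGroup G]
    [Fintype G] (A C : ι → Finset G)
    (h : ∀ j j', ∀ x ∈ A j, ∀ y ∈ C j, ∀ x' ∈ A j', ∀ y' ∈ C j',
      x - y = x' - y' → (j, x, y) = (j', x', y')) :
    ∑ j, #(A j) * #(C j) ≤ Fintype.card G := by
  have hinj : Set.InjOn (fun p : (_ : ι) × G × G => p.2.1 - p.2.2)
      (univ.sigma fun j => A j ×ˢ C j) := by
    rintro ⟨j, x, y⟩ hp ⟨j', x', y'⟩ hq heq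
    simp only [coe_sigma, Set.mem_sigma_iff, coe_univ, Set.mem_univ, coe_product,
      Set.mem_prod, mem_coe, true_and] at hp hq
    have hsame := h j j' x hp.1 y hp.2 x' hq.1 y' hq.2 heq
    simp only [Prod.mk.injEq] at hsame
    obtain ⟨rfl, rfl, rfl⟩ := hsame
    rfl
  simpa only [card_sigma, card_product, card_univ] using
    card_le_card_of_injOn _ (fun _ _ => mem_univ _) hinj

theorem stmt_8_general (n N : ℕ) (hN : 0 < N) (B : Fin 2 → Fin n → Finset (ZMod N))
    (hcard : ∀ (i : Fin 2) (j : Fin n), (B i j).card = 2)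
    (h4 : ∀ (i i' : Fin 2), i ≠ i' → ∀ (j j' : Fin n),
      ∀ x ∈ B i j, ∀ y ∈ B i' j, ∀ x' ∈ B i j', ∀ y' ∈ B i' j',
      (j, x, y) ≠ (j', x', y') → x - y ≠ x' - y') :
    4 * n ≤ N := by
  have : NeZero N := ⟨hN.ne'⟩
  have hsum := sum_card_mul_card_le_card_of_sub_injective (B 0) (B 1)
    fun j j' x hx y hy x' hx' y' hy' heq => by
      by_contra hne
      exact h4 0 1 (by decide) j j' x hx y hy x' hx' y' hy' hne heq
  simpa [hcard, mul_comm] using hsum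

/-- For a multiple-edge (4,2n)-regular exponent matrix with all entries of cardinality 2,
girth at least 6 forces `N ≥ 4n`. -/
theorem stmt_8 (n N : ℕ) (hN : 0 < N) (B : Fin 2 → Fin n → Finset (ZMod N))
    (hcard : ∀ (i : Fin 2) (j : Fin n), (B i j).card = 2)
    (h1 : ∀ (i : Fin 2) (j : Fin n), ∀ x ∈ B i j, ∀ y ∈ B i j, x ≠ y → 2 * (x - y) ≠ 0)
    (h2 : ∀ (i : Fin 2) (j j' : Fin n), ∀ x ∈ B i j, ∀ y ∈ B i j,
      ∀ x' ∈ B i j', ∀ y' ∈ B i j', x ≠ y → x' ≠ y' →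
      (j, x, y) ≠ (j', x', y') → x - y ≠ x' - y')
    (h3 : ∀ (j : Fin n) (i i' : Fin 2), ∀ x ∈ B i j, ∀ y ∈ B i j,
      ∀ x' ∈ B i' j, ∀ y' ∈ B i' j, x ≠ y → x' ≠ y' →
      (i, x, y) ≠ (i', x', y') → x - y ≠ x' - y')
    (h4 : ∀ (i i' : Fin 2), i ≠ i' → ∀ (j j' : Fin n),
      ∀ x ∈ B i j, ∀ y ∈ B i' j, ∀ x' ∈ B i j', ∀ y' ∈ B i' j',
      (j, x, y) ≠ (j', x', y') → x - y ≠ x' - y') :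
    4 * n ≤ N :=
  stmt_8_general n N hN B hcard h4
end

section
/- Let B be a 4×n matrix over ZMod N with difference-matrix rows D_1,...,D_6 defined by D_1 j = B 0 j - B 1 j, D_2 j = B 0 j - B 2 j, D_3 j = B 0 j - B 3 j, D_4 j = B 1 j - B 2 j, D_5 j = B 1 j - B 3 j, D_6 j = B 2 j - B 3 j. Then the Tanner graph is 6-cycle free if and only if for all pairwise distinct columns j1, j2, j3: -D_1 j1 + D_2 j2 - D_4 j3 ≠ 0, -D_1 j1 + D_3 j2 - D_5 j3 ≠ 0, -D_2 j1 + D_3 j2 - D_6 j3 ≠ 0, and -D_4 j1 + D_5 j2 - D_6 j3 ≠ 0 (all in ZMod N, over all assignments of distinct columns). -/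
/-!
Fossorier's alternating sum `cycleSum` along a 6-cycle of the Tanner graph is unchanged by
rotating the cycle and negated by reversing it, so only increasing row triples need to be
inspected. A 4-row matrix has four of them, and for each the sum is a signed combination of
three rows of the difference matrix.
-/

namespace SixCycle

variable {ι κ G : Type*} [AddCommGroup G]

def cycleSum (B : Matrix ι κ G) (i0 i1 i2 : ι) (j0 j1 j2 : κ) : G :=
  (B i0 j0 - B i0 j1) + (B i1 j1 - B i1 j2) + (B i2 j2 - B i2 j0)

def HasSixCycle (B : Matrix ι κ G) : Prop :=
  ∃ (i0 i1 i2 : ι) (j0 j1 j2 : κ),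
    i0 ≠ i1 ∧ i1 ≠ i2 ∧ i0 ≠ i2 ∧ j0 ≠ j1 ∧ j1 ≠ j2 ∧ j0 ≠ j2 ∧ cycleSum B i0 i1 i2 j0 j1 j2 = 0

def HasSixCycleOnRows (B : Matrix ι κ G) (i0 i1 i2 : ι) : Prop :=
  ∃ j0 j1 j2 : κ, j0 ≠ j1 ∧ j1 ≠ j2 ∧ j0 ≠ j2 ∧ cycleSum B i0 i1 i2 j0 j1 j2 = 0

variable {B : Matrix ι κ G}

theorem cycleSum_rotate (B : Matrix ι κ G) (i0 i1 i2 : ι) (j0 j1 j2 : κ) :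
    cycleSum B i1 i2 i0 j1 j2 j0 = cycleSum B i0 i1 i2 j0 j1 j2 := by
  unfold cycleSum; abel

theorem cycleSum_reverse (B : Matrix ι κ G) (i0 i1 i2 : ι) (j0 j1 j2 : κ) :
    cycleSum B i0 i2 i1 j1 j0 j2 = -cycleSum B i0 i1 i2 j0 j1 j2 := by
  unfold cycleSum; abel

theorem cycleSum_eq_rowDiff (B : Matrix ι κ G) (a b c : ι) (j0 j1 j2 : κ) :
    cycleSum B a b c j0 j1 j2 = -(B a j1 - B b j1) + (B a j0 - B c j0) - (B b j2 - B c j2) := by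
  unfold cycleSum; abel

theorem HasSixCycleOnRows.rotate {i0 i1 i2 : ι} (h : HasSixCycleOnRows B i0 i1 i2) :
    HasSixCycleOnRows B i1 i2 i0 := by
  obtain ⟨j0, j1, j2, h01, h12, h02, hsum⟩ := h
  exact ⟨j1, j2, j0, h12, h02.symm, h01.symm, by rwa [cycleSum_rotate]⟩

theorem HasSixCycleOnRows.reverse {i0 i1 i2 : ι} (h : HasSixCycleOnRows B i0 i1 i2) :
    HasSixCycleOnRows B i0 i2 i1 := by
  obtain ⟨j0, j1, j2, h01, h12, h02, hsum⟩ := h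
  exact ⟨j1, j0, j2, h01.symm, h02, h12, by rw [cycleSum_reverse, hsum, neg_zero]⟩

theorem HasSixCycleOnRows.exists_lt [LinearOrder ι] {i0 i1 i2 : ι}
    (h : HasSixCycleOnRows B i0 i1 i2) (h01 : i0 ≠ i1) (h12 : i1 ≠ i2) (h02 : i0 ≠ i2) :
    ∃ a b c, a < b ∧ b < c ∧ HasSixCycleOnRows B a b c := by
  rcases h01.lt_or_gt with h01 | h10 <;> rcases h12.lt_or_gt with h12 | h21 <;>
    rcases h02.lt_or_gt with h02 | h20
  · exact ⟨_, _, _, h01, h12, h⟩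
  · exact absurd (h01.trans h12) h20.not_gt
  · exact ⟨_, _, _, h02, h21, h.reverse⟩
  · exact ⟨_, _, _, h20, h01, h.rotate.rotate⟩
  · exact ⟨_, _, _, h10, h02, h.rotate.reverse⟩
  · exact ⟨_, _, _, h12, h20, h.rotate⟩
  · exact absurd (h21.trans h10) h02.not_gt
  · exact ⟨_, _, _, h21, h10, h.reverse.rotate⟩

theorem hasSixCycle_iff_exists_lt [LinearOrder ι] :
    HasSixCycle B ↔ ∃ a b c, a < b ∧ b < c ∧ HasSixCycleOnRows B a b c := by
  constructor
  · rintro ⟨i0, i1, i2, j0, j1, j2, hi01, hi12, hi02, hj01, hj12, hj02, hsum⟩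
    exact HasSixCycleOnRows.exists_lt ⟨j0, j1, j2, hj01, hj12, hj02, hsum⟩ hi01 hi12 hi02
  · rintro ⟨a, b, c, hab, hbc, j0, j1, j2, hj01, hj12, hj02, hsum⟩
    exact ⟨a, b, c, j0, j1, j2, hab.ne, hbc.ne, (hab.trans hbc).ne, hj01, hj12, hj02, hsum⟩

theorem not_hasSixCycleOnRows_iff {a b c : ι} :
    ¬ HasSixCycleOnRows B a b c ↔ ∀ j1 j2 j3 : κ, j1 ≠ j2 → j1 ≠ j3 → j2 ≠ j3 →
      -(B a j1 - B b j1) + (B a j2 - B c j2) - (B b j3 - B c j3) ≠ 0 := by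
  simp only [HasSixCycleOnRows, cycleSum_eq_rowDiff, not_exists, not_and]
  exact ⟨fun h j1 j2 j3 h12 h13 h23 => h j2 j1 j3 h12.symm h13 h23,
    fun h j0 j1 j2 h01 h12 h02 => h j1 j0 j2 h01.symm h12 h02⟩

theorem fin_four_lt_triples {a b c : Fin 4} (hab : a < b) (hbc : b < c) :
    (a = 0 ∧ b = 1 ∧ c = 2) ∨ (a = 0 ∧ b = 1 ∧ c = 3) ∨ (a = 0 ∧ b = 2 ∧ c = 3) ∨
      (a = 1 ∧ b = 2 ∧ c = 3) := by
  revert a b c; decide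

theorem hasSixCycle_fin_four_iff {B : Matrix (Fin 4) κ G} :
    HasSixCycle B ↔ HasSixCycleOnRows B 0 1 2 ∨ HasSixCycleOnRows B 0 1 3 ∨
      HasSixCycleOnRows B 0 2 3 ∨ HasSixCycleOnRows B 1 2 3 := by
  rw [hasSixCycle_iff_exists_lt]
  constructor
  · rintro ⟨a, b, c, hab, hbc, h⟩
    rcases fin_four_lt_triples hab hbc with ⟨rfl, rfl, rfl⟩ | ⟨rfl, rfl, rfl⟩ |
      ⟨rfl, rfl, rfl⟩ | ⟨rfl, rfl, rfl⟩ <;> simp only [h, or_true, true_or]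
  · rintro (h | h | h | h) <;> exact ⟨_, _, _, by decide, by decide, h⟩

end SixCycle

open SixCycle in
/-- For a 4×n exponent matrix, 6-cycle-freeness is equivalent to the four inequalities
on the row triples (1,2,4), (1,3,5), (2,3,6), (4,5,6) of the difference matrix `D`. -/
theorem stmt_12 (n N : ℕ) (B : Matrix (Fin 4) (Fin n) (ZMod N)) :
    (¬ ∃ (i0 i1 i2 : Fin 4) (j0 j1 j2 : Fin n),
        i0 ≠ i1 ∧ i1 ≠ i2 ∧ i0 ≠ i2 ∧ j0 ≠ j1 ∧ j1 ≠ j2 ∧ j0 ≠ j2 ∧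
        (B i0 j0 - B i0 j1) + (B i1 j1 - B i1 j2) + (B i2 j2 - B i2 j0) = 0) ↔
    (∀ j1 j2 j3 : Fin n, j1 ≠ j2 → j1 ≠ j3 → j2 ≠ j3 →
        (-(B 0 j1 - B 1 j1) + (B 0 j2 - B 2 j2) - (B 1 j3 - B 2 j3) ≠ 0) ∧
        (-(B 0 j1 - B 1 j1) + (B 0 j2 - B 3 j2) - (B 1 j3 - B 3 j3) ≠ 0) ∧
        (-(B 0 j1 - B 2 j1) + (B 0 j2 - B 3 j2) - (B 2 j3 - B 3 j3) ≠ 0) ∧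
        (-(B 1 j1 - B 2 j1) + (B 1 j2 - B 3 j2) - (B 2 j3 - B 3 j3) ≠ 0)) := by
  change ¬ HasSixCycle B ↔ _
  simp only [hasSixCycle_fin_four_iff, not_or, not_hasSixCycleOnRows_iff, ← forall_and]
end

section
/- Consider the 3×4 exponent matrix B over ZMod 37 with rows (0,0,0,0), (0,1,3,24), (0,27,7,19). Then the associated DD-matrix has all 36 entries (18 values together with their negatives, over the 3 row-pairs and 6 unordered column-pairs) pairwise distinct and nonzero in ZMod 37. Consequently B satisfies the 8-cycle-free conditions of Theorem 1 (the 4×4 condition being vacuous for 3 rows) and, since the first row and column are zero, the Tanner graph of the corresponding (3,4)-regular QC-LDPC code has girth at least 10. -/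
/-!
A `2k`-cycle condition quantifies over `k` rows and `k` columns of a fixed finite matrix over
`ZMod 37`, so for `k ≤ 4` it is a finite check, done by evaluation once the cycle is written out
as explicit tuples. For `k = 2` no check is needed: the cycle sum of a 4-cycle is, up to sign,
a `DD` entry.
-/

/-- Fossorier's condition for a `2k`-cycle in the Tanner graph of the QC-LDPC code with
exponent matrix `B`. -/
def hasFossorierCycle {m n N : ℕ} (B : Matrix (Fin m) (Fin n) (ZMod N)) (k : ℕ)
    [NeZero k] : Prop :=
  ∃ (r : Fin k → Fin m) (c : Fin k → Fin n),
    (∀ t, r t ≠ r (t + 1)) ∧ (∀ t, c t ≠ c (t + 1)) ∧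
    ∑ t, (B (r t) (c t) - B (r t) (c (t + 1))) = 0

/-- The concrete 3×4 exponent matrix over `ZMod 37`. -/
def B15 : Matrix (Fin 3) (Fin 4) (ZMod 37) :=
  !![0, 0, 0, 0; 0, 1, 3, 24; 0, 27, 7, 19]

section FossorierCycle

variable {m n N : ℕ} (B : Matrix (Fin m) (Fin n) (ZMod N))

theorem hasFossorierCycle_two_iff :
    hasFossorierCycle B 2 ↔ ∃ (r₀ r₁ : Fin m) (c₀ c₁ : Fin n), r₀ ≠ r₁ ∧ c₀ ≠ c₁ ∧
      (B r₀ c₀ - B r₀ c₁) + (B r₁ c₁ - B r₁ c₀) = 0 := by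
  constructor
  · rintro ⟨r, c, hr, hc, hsum⟩
    rw [Fin.sum_univ_two] at hsum
    exact ⟨r 0, r 1, c 0, c 1, hr 0, hc 0, hsum⟩
  · rintro ⟨r₀, r₁, c₀, c₁, hr, hc, hsum⟩
    refine ⟨![r₀, r₁], ![c₀, c₁], ?_, ?_, by rw [Fin.sum_univ_two]; exact hsum⟩ <;>
      intro t <;> fin_cases t <;> simp [hr, hc, hr.symm, hc.symm]

theorem hasFossorierCycle_three_iff :
    hasFossorierCycle B 3 ↔ ∃ (r₀ r₁ r₂ : Fin m) (c₀ c₁ c₂ : Fin n),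
      r₀ ≠ r₁ ∧ r₁ ≠ r₂ ∧ r₂ ≠ r₀ ∧ c₀ ≠ c₁ ∧ c₁ ≠ c₂ ∧ c₂ ≠ c₀ ∧
      (B r₀ c₀ - B r₀ c₁) + (B r₁ c₁ - B r₁ c₂) + (B r₂ c₂ - B r₂ c₀) = 0 := by
  constructor
  · rintro ⟨r, c, hr, hc, hsum⟩
    rw [Fin.sum_univ_three] at hsum
    exact ⟨r 0, r 1, r 2, c 0, c 1, c 2, hr 0, hr 1, hr 2, hc 0, hc 1, hc 2, hsum⟩
  · rintro ⟨r₀, r₁, r₂, c₀, c₁, c₂, hr₀, hr₁, hr₂, hc₀, hc₁, hc₂, hsum⟩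
    refine ⟨![r₀, r₁, r₂], ![c₀, c₁, c₂], ?_, ?_, by rw [Fin.sum_univ_three]; exact hsum⟩ <;>
      intro t <;> fin_cases t <;> simpa

theorem hasFossorierCycle_four_iff :
    hasFossorierCycle B 4 ↔ ∃ (r₀ r₁ r₂ r₃ : Fin m) (c₀ c₁ c₂ c₃ : Fin n),
      r₀ ≠ r₁ ∧ r₁ ≠ r₂ ∧ r₂ ≠ r₃ ∧ r₃ ≠ r₀ ∧ c₀ ≠ c₁ ∧ c₁ ≠ c₂ ∧ c₂ ≠ c₃ ∧ c₃ ≠ c₀ ∧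
      (B r₀ c₀ - B r₀ c₁) + (B r₁ c₁ - B r₁ c₂) + (B r₂ c₂ - B r₂ c₃) +
        (B r₃ c₃ - B r₃ c₀) = 0 := by
  constructor
  · rintro ⟨r, c, hr, hc, hsum⟩
    rw [Fin.sum_univ_four] at hsum
    exact ⟨r 0, r 1, r 2, r 3, c 0, c 1, c 2, c 3,
      hr 0, hr 1, hr 2, hr 3, hc 0, hc 1, hc 2, hc 3, hsum⟩
  · rintro ⟨r₀, r₁, r₂, r₃, c₀, c₁, c₂, c₃, hr₀, hr₁, hr₂, hr₃, hc₀, hc₁, hc₂, hc₃, hsum⟩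
    refine ⟨![r₀, r₁, r₂, r₃], ![c₀, c₁, c₂, c₃], ?_, ?_,
      by rw [Fin.sum_univ_four]; exact hsum⟩ <;>
      intro t <;> fin_cases t <;> simpa

theorem not_hasFossorierCycle_two_of_dd_ne_zero
    (hB : ∀ (i i' : Fin m) (j j' : Fin n), i < i' → j ≠ j' →
      (B i j - B i' j) - (B i j' - B i' j') ≠ 0) :
    ¬ hasFossorierCycle B 2 := by
  rw [hasFossorierCycle_two_iff]
  rintro ⟨r₀, r₁, c₀, c₁, hr, hc, hsum⟩
  rcases hr.lt_or_gt with hlt | hgt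
  · exact hB r₀ r₁ c₀ c₁ hlt hc (by linear_combination hsum)
  · exact hB r₁ r₀ c₀ c₁ hgt hc (by linear_combination -hsum)

end FossorierCycle

theorem not_hasFossorierCycle_B15_three : ¬ hasFossorierCycle B15 3 := by
  rw [hasFossorierCycle_three_iff]; decide

theorem not_hasFossorierCycle_B15_four : ¬ hasFossorierCycle B15 4 := by
  rw [hasFossorierCycle_four_iff]; decide

set_option synthInstance.maxSize 1000 in
/-- For the given 3×4 exponent matrix over `ZMod 37`, all `DD`-entries are nonzero and
pairwise distinct, and consequently the Tanner graph has no 4-, 6-, or 8-cycles,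
i.e. girth at least 10. -/
theorem stmt_15 :
    (∀ (i i' : Fin 3) (j j' : Fin 4), i < i' → j ≠ j' →
      (B15 i j - B15 i' j) - (B15 i j' - B15 i' j') ≠ 0) ∧
    (∀ (i1 i2 i1' i2' : Fin 3) (j1 j2 j1' j2' : Fin 4),
      i1 < i2 → i1' < i2' → j1 ≠ j2 → j1' ≠ j2' →
      (i1, i2, j1, j2) ≠ (i1', i2', j1', j2') →
      (B15 i1 j1 - B15 i2 j1) - (B15 i1 j2 - B15 i2 j2) ≠
        (B15 i1' j1' - B15 i2' j1') - (B15 i1' j2' - B15 i2' j2')) ∧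
    ¬ hasFossorierCycle B15 2 ∧ ¬ hasFossorierCycle B15 3 ∧ ¬ hasFossorierCycle B15 4 := by
  have hDD_ne_zero : ∀ (i i' : Fin 3) (j j' : Fin 4), i < i' → j ≠ j' →
      (B15 i j - B15 i' j) - (B15 i j' - B15 i' j') ≠ 0 := by decide
  exact ⟨hDD_ne_zero, by decide, not_hasFossorierCycle_two_of_dd_ne_zero B15 hDD_ne_zero,
    not_hasFossorierCycle_B15_three, not_hasFossorierCycle_B15_four⟩
end

section
/- Let B be a multiple-edge exponent matrix over ZMod N (each entry B_{ij} a finite subset of ZMod N). If for some entry B_{ij} there exist distinct x, y ∈ B_{ij} with 3(x - y) = 0 in ZMod N, then the Tanner graph contains a 6-cycle. More generally, for any entry with three distinct elements x, y, z ∈ B_{ij} (cardinality ≥ 3), the sum (x - y) + (y - z) + (z - x) = 0 always, so any base-matrix entry ≥ 3 produces an inevitable 6-cycle regardless of N. -/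
/-
Both cycles stay inside the single entry `B i j`, entering it three times. Alternating two
distinct shifts `x, y` gives the shift sum `3 (x - y)`; cycling through three distinct shifts
`x, z, y` gives `(x - z) + (y - x) + (z - y)`, which vanishes identically.
-/

/-- Fossorier-type 6-cycle condition for multiple-edge QC-LDPC codes: a closed walk
through cells of the exponent matrix with element choices, where consecutive choices
within the same cell must differ. -/
def hasSixCycleME {m n N : ℕ} (B : Fin m → Fin n → Finset (ZMod N)) : Prop :=
  ∃ (rw : Fin 3 → Fin m) (cl : Fin 3 → Fin n) (a b : Fin 3 → ZMod N),
    (∀ t, a t ∈ B (rw t) (cl t)) ∧ (∀ t, b t ∈ B (rw t) (cl (t + 1))) ∧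
    (∀ t, cl t = cl (t + 1) → a t ≠ b t) ∧
    (∀ t, rw t = rw (t + 1) → b t ≠ a (t + 1)) ∧
    ∑ t, (a t - b t) = 0

theorem hasSixCycleME_of_walk_in_entry {m n N : ℕ} {B : Fin m → Fin n → Finset (ZMod N)}
    {i : Fin m} {j : Fin n} (a b : Fin 3 → ZMod N) (ha : ∀ t, a t ∈ B i j)
    (hb : ∀ t, b t ∈ B i j) (hab : ∀ t, a t ≠ b t) (hba : ∀ t, b t ≠ a (t + 1))
    (hsum : ∑ t, (a t - b t) = 0) : hasSixCycleME B :=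
  ⟨fun _ => i, fun _ => j, a, b, ha, hb, fun t _ => hab t, fun t _ => hba t, hsum⟩

theorem hasSixCycleME_of_three_mul_sub_eq_zero {m n N : ℕ} {B : Fin m → Fin n → Finset (ZMod N)}
    {i : Fin m} {j : Fin n} {x y : ZMod N} (hx : x ∈ B i j) (hy : y ∈ B i j) (hxy : x ≠ y)
    (h3 : 3 * (x - y) = 0) : hasSixCycleME B := by
  refine hasSixCycleME_of_walk_in_entry (fun _ => x) (fun _ => y) (fun _ => hx) (fun _ => hy)
    (fun _ => hxy) (fun _ => hxy.symm) ?_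
  simpa [mul_sub] using h3

theorem hasSixCycleME_of_three_distinct {m n N : ℕ} {B : Fin m → Fin n → Finset (ZMod N)}
    {i : Fin m} {j : Fin n} {x y z : ZMod N} (hx : x ∈ B i j) (hy : y ∈ B i j)
    (hz : z ∈ B i j) (hxy : x ≠ y) (hyz : y ≠ z) (hxz : x ≠ z) : hasSixCycleME B := by
  refine hasSixCycleME_of_walk_in_entry (i := i) (j := j) ![x, y, z] ![z, x, y] ?_ ?_ ?_ ?_ ?_
  · intro t; fin_cases t <;> assumption
  · intro t; fin_cases t <;> assumption
  · intro t; fin_cases t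
    exacts [hxz, hxy.symm, hyz.symm]
  · intro t; fin_cases t
    exacts [hyz.symm, hxz, hxy.symm]
  · simp only [Fin.sum_univ_three, Matrix.cons_val_zero, Matrix.cons_val_one,
      Matrix.cons_val_two, Matrix.head_cons, Matrix.tail_cons]
    ring

/-- If some entry of a multiple-edge exponent matrix has two distinct elements with
`3(x - y) = 0`, the Tanner graph has a 6-cycle; and any entry with three distinct
elements gives an inevitable 6-cycle since `(x-y)+(y-z)+(z-x) = 0` always. -/
theorem stmt_16 (m n N : ℕ) (B : Fin m → Fin n → Finset (ZMod N)) :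
    (∀ (i : Fin m) (j : Fin n),
      (∃ x ∈ B i j, ∃ y ∈ B i j, x ≠ y ∧ 3 * (x - y) = 0) → hasSixCycleME B) ∧
    (∀ (i : Fin m) (j : Fin n) (x y z : ZMod N), x ∈ B i j → y ∈ B i j → z ∈ B i j →
      x ≠ y → y ≠ z → x ≠ z →
      (x - y) + (y - z) + (z - x) = 0 ∧ hasSixCycleME B) := by
  refine ⟨?_, ?_⟩
  · rintro i j ⟨x, hx, y, hy, hxy, h3⟩
    exact hasSixCycleME_of_three_mul_sub_eq_zero hx hy hxy h3
  · intro i j x y z hx hy hz hxy hyz hxz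
    exact ⟨by ring, hasSixCycleME_of_three_distinct hx hy hz hxy hyz hxz⟩
end

section
/- Let B be an m×n matrix over ZMod N whose associated Tanner graph is 8-cycle free, in the sense that all DD-entries (B i j - B i' j) - (B i j' - B i' j') for i < i' and ordered pairs of distinct columns j ≠ j' are pairwise distinct. Fix any row-pair r = (i,i'). Then the map sending each ordered pair of distinct columns (j,j') to the DD-entry D_r j - D_r j' is injective, and the images for j < j' versus j > j' are negatives of each other; hence the n(n-1)/2 'small' representatives (taking from each pair {x, -x} the one in {1,...,⌊N/2⌋}) are pairwise distinct elements of {1,...,⌊N/2⌋}, giving N ≥ n(n-1) + 1 for each single row-pair. -/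
/-!
Along a fixed row pair the `DD`-entries are the differences `D j - D j'` of the single vector
`D j = B i j - B i' j`, so 8-cycle-freeness makes `(j, j') ↦ D j - D j'` injective on ordered
pairs of distinct columns. None of these `n(n-1)` values is `0`: if `D j - D j' = 0` then also
`D j' - D j = 0`, and the pairs `(j, j')`, `(j', j)` would collide. Hence `n(n-1)` distinct
nonzero residues fit into `ZMod N`.
-/

open Finset

theorem card_mul_card_sub_one_add_one_le_of_injOn_sub {ι G : Type*} [Fintype ι] [DecidableEq ι]
    [AddGroup G] [Fintype G] (D : ι → G)
    (hD : Set.InjOn (fun p : ι × ι => D p.1 - D p.2) {p | p.1 ≠ p.2}) :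
    Fintype.card ι * (Fintype.card ι - 1) + 1 ≤ Fintype.card G := by
  classical
  set f : ι × ι → G := fun p => D p.1 - D p.2
  have hinj : Set.InjOn f (univ.offDiag : Finset (ι × ι)) := by
    simpa [Set.InjOn] using hD
  have hzero : (0 : G) ∉ univ.offDiag.image f := by
    rintro hmem
    obtain ⟨⟨a, b⟩, hmem_ab, hf⟩ := mem_image.mp hmem
    have hab : a ≠ b := (mem_offDiag.mp hmem_ab).2.2
    have hba : f (b, a) = f (a, b) := by
      simp only [f, sub_eq_zero] at hf ⊢
      rw [hf]
    exact hab (Prod.ext_iff.mp (hD hab.symm hab hba)).2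
  calc Fintype.card ι * (Fintype.card ι - 1) + 1
      = (insert 0 (univ.offDiag.image f)).card := by
        rw [card_insert_of_notMem hzero, card_image_of_injOn hinj, offDiag_card, card_univ,
          Nat.mul_sub_one]
    _ ≤ Fintype.card G := card_le_univ _

/-- For an 8-cycle-free exponent matrix, the `DD`-entries of any fixed row-pair are
injective over ordered pairs of distinct columns, reversing the column order negates
the entry, and consequently `N ≥ n(n-1) + 1`. -/
theorem stmt_19 (m n N : ℕ) (hN : 0 < N) (B : Matrix (Fin m) (Fin n) (ZMod N))
    (hdist : ∀ (i1 i2 i1' i2' : Fin m) (j1 j2 j1' j2' : Fin n),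
      i1 < i2 → i1' < i2' → j1 ≠ j2 → j1' ≠ j2' →
      (i1, i2, j1, j2) ≠ (i1', i2', j1', j2') →
      (B i1 j1 - B i2 j1) - (B i1 j2 - B i2 j2) ≠
        (B i1' j1' - B i2' j1') - (B i1' j2' - B i2' j2'))
    (i i' : Fin m) (hii : i < i') :
    (∀ (j1 j2 j1' j2' : Fin n), j1 ≠ j2 → j1' ≠ j2' → (j1, j2) ≠ (j1', j2') →
      (B i j1 - B i' j1) - (B i j2 - B i' j2) ≠
        (B i j1' - B i' j1') - (B i j2' - B i' j2')) ∧
    (∀ (j1 j2 : Fin n),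
      (B i j2 - B i' j2) - (B i j1 - B i' j1) =
        -((B i j1 - B i' j1) - (B i j2 - B i' j2))) ∧
    n * (n - 1) + 1 ≤ N := by
  have hrow : ∀ (j1 j2 j1' j2' : Fin n), j1 ≠ j2 → j1' ≠ j2' → (j1, j2) ≠ (j1', j2') →
      (B i j1 - B i' j1) - (B i j2 - B i' j2) ≠
        (B i j1' - B i' j1') - (B i j2' - B i' j2') :=
    fun j1 j2 j1' j2' h12 h12' hne =>
      hdist i i' i i' j1 j2 j1' j2' hii hii h12 h12' (by simpa using hne)
  refine ⟨hrow, fun _ _ => (neg_sub _ _).symm, ?_⟩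
  have : NeZero N := ⟨hN.ne'⟩
  have hinj : Set.InjOn (fun p : Fin n × Fin n => (B i p.1 - B i' p.1) - (B i p.2 - B i' p.2))
      {p | p.1 ≠ p.2} := fun p hp q hq hpq => by
    by_contra hne
    exact hrow p.1 p.2 q.1 q.2 hp hq hne hpq
  simpa using card_mul_card_sub_one_add_one_le_of_injOn_sub (fun j => B i j - B i' j) hinj
end
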